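/- Let ξ₁, ..., ξ_n : ℂ → ℂ be smooth unit-modulus functions, each satisfying ∂̄∂ξ_k + (∂ξ_k)(∂̄ξ̄_k)ξ_k + (∂̄ ln a)(∂ξ_k) = 0 for a common positive smooth real function a. Then the product η = ξ₁ξ₂⋯ξ_n is unit-modulus and satisfies ∂̄∂η + (∂η)(∂̄η̄)η + (∂̄ ln a)(∂η) = 0. -/

import Mathlib

open Complex ComplexConjugate

noncomputable def wd (f : ℂ → ℂ) (z : ℂ) : ℂ :=
  (fderiv ℝ f z 1 - Complex.I * fderiv ℝ f z Complex.I) / 2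

noncomputable def wdb (f : ℂ → ℂ) (z : ℂ) : ℂ :=
  (fderiv ℝ f z 1 + Complex.I * fderiv ℝ f z Complex.I) / 2

noncomputable def lnC (a : ℂ → ℝ) (z : ℂ) : ℂ := (Real.log (a z) : ℂ)

lemma wdb_add (f g : ℂ → ℂ) (z : ℂ) (hf : DifferentiableAt ℝ f z) (hg : DifferentiableAt ℝ g z) :
    wdb (fun w => f w + g w) z = wdb f z + wdb g z := by
  simp only [wdb, fderiv_fun_add hf hg, ContinuousLinearMap.add_apply]; ring

lemma wd_mul (f g : ℂ → ℂ) (z : ℂ) (hf : DifferentiableAt ℝ f z) (hg : DifferentiableAt ℝ g z) :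
    wd (fun w => f w * g w) z = wd f z * g z + f z * wd g z := by
  simp only [wd, fderiv_fun_mul hf hg, ContinuousLinearMap.add_apply, ContinuousLinearMap.smul_apply,
    smul_eq_mul]; ring

lemma wdb_mul (f g : ℂ → ℂ) (z : ℂ) (hf : DifferentiableAt ℝ f z) (hg : DifferentiableAt ℝ g z) :
    wdb (fun w => f w * g w) z = wdb f z * g z + f z * wdb g z := by
  simp only [wdb, fderiv_fun_mul hf hg, ContinuousLinearMap.add_apply, ContinuousLinearMap.smul_apply,
    smul_eq_mul]; ring

lemma wd_const (c : ℂ) (z : ℂ) : wd (fun _ => c) z = 0 := by simp [wd, fderiv_const]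

lemma wdb_const (c : ℂ) (z : ℂ) : wdb (fun _ => c) z = 0 := by simp [wdb, fderiv_const]

lemma contDiff_wd {f : ℂ → ℂ} (hf : ContDiff ℝ (⊤ : ℕ∞) f) : ContDiff ℝ (⊤ : ℕ∞) (wd f) := by
  have h1 : ContDiff ℝ (⊤ : ℕ∞) (fun z => fderiv ℝ f z 1) :=
    (hf.fderiv_right (by simp)).clm_apply contDiff_const
  have h2 : ContDiff ℝ (⊤ : ℕ∞) (fun z => fderiv ℝ f z Complex.I) :=
    (hf.fderiv_right (by simp)).clm_apply contDiff_const
  exact (h1.sub (contDiff_const.mul h2)).div_const 2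

lemma contDiff_conj' {f : ℂ → ℂ} (hf : ContDiff ℝ (⊤ : ℕ∞) f) :
    ContDiff ℝ (⊤ : ℕ∞) (fun w => conj (f w)) :=
  Complex.conjCLE.contDiff.comp hf

lemma alg (A A₂ B B' Bc C C' Cc fz gz u v cz : ℂ)
    (h1 : A + B*Bc*fz + cz*B = 0) (h2 : A₂ + C*Cc*gz + cz*C = 0)
    (h3 : B'*u + fz*Bc = 0) (h4 : C'*v + gz*Cc = 0)
    (h5 : fz*u = 1) (h6 : gz*v = 1) :
    (A*gz + B*C' + B'*C + fz*A₂) + (B*gz + fz*C)*((Bc*v + u*Cc))*(fz*gz)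
      + cz*(B*gz + fz*C) = 0 := by
  have hBc : Bc = -B'*u*u := by linear_combination u*h3 - Bc*h5
  have hCc : Cc = -C'*v*v := by linear_combination v*h4 - Cc*h6
  have hA : A = -(B*(-B'*u*u)*fz + cz*B) := by rw [← hBc]; linear_combination h1
  have hA2 : A₂ = -(C*(-C'*v*v)*gz + cz*C) := by rw [← hCc]; linear_combination h2
  subst hBc hCc hA hA2
  linear_combination (-(C*C'*v^2*fz*gz) - B*C' - B'*C*(fz*u*gz*v + gz*v))*h5
    + (-(B*B'*u^2*fz*gz) - B*C'*(fz*u*gz*v + fz*u) - B'*C)*h6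

lemma unitmod_wdb {f : ℂ → ℂ} (hf : ContDiff ℝ (⊤ : ℕ∞) f) (hfm : ∀ z, f z * conj (f z) = 1)
    (z : ℂ) : wdb f z * conj (f z) + f z * wdb (fun w => conj (f w)) z = 0 := by
  have h0 : wdb (fun w => f w * conj (f w)) z = 0 := by
    have he : (fun w => f w * conj (f w)) = fun _ => (1:ℂ) := funext hfm
    rw [he, wdb_const]
  rwa [wdb_mul f (fun w => conj (f w)) z (hf.differentiable (by simp) z)
    ((contDiff_conj' hf).differentiable (by simp) z)] at h0

lemma key (c f g : ℂ → ℂ) (hf : ContDiff ℝ (⊤ : ℕ∞) f) (hg : ContDiff ℝ (⊤ : ℕ∞) g)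
    (hfm : ∀ z, f z * conj (f z) = 1) (hgm : ∀ z, g z * conj (g z) = 1)
    (hfe : ∀ z, wdb (wd f) z + wd f z * wdb (fun w => conj (f w)) z * f z + c z * wd f z = 0)
    (hge : ∀ z, wdb (wd g) z + wd g z * wdb (fun w => conj (g w)) z * g z + c z * wd g z = 0) :
    ContDiff ℝ (⊤ : ℕ∞) (fun w => f w * g w) ∧ (∀ z, (f z * g z) * conj (f z * g z) = 1) ∧
    (∀ z, wdb (wd (fun w => f w * g w)) z
      + wd (fun w => f w * g w) z * wdb (fun w => conj (f w * g w)) z * (f z * g z)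
      + c z * wd (fun w => f w * g w) z = 0) := by
  have df : ∀ z, DifferentiableAt ℝ f z := hf.differentiable (by simp)
  have dg : ∀ z, DifferentiableAt ℝ g z := hg.differentiable (by simp)
  have dcf : ∀ z, DifferentiableAt ℝ (fun w => conj (f w)) z :=
    (contDiff_conj' hf).differentiable (by simp)
  have dcg : ∀ z, DifferentiableAt ℝ (fun w => conj (g w)) z :=
    (contDiff_conj' hg).differentiable (by simp)
  have dwf : ∀ z, DifferentiableAt ℝ (wd f) z := (contDiff_wd hf).differentiable (by simp)
  have dwg : ∀ z, DifferentiableAt ℝ (wd g) z := (contDiff_wd hg).differentiable (by simp)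
  have hmodP : ∀ z, (f z * g z) * conj (f z * g z) = 1 := fun z => by
    rw [map_mul]; linear_combination (g z * conj (g z)) * hfm z + hgm z
  refine ⟨hf.mul hg, hmodP, fun z => ?_⟩
  have hwdP : wd (fun w => f w * g w) = fun w => wd f w * g w + f w * wd g w :=
    funext fun w => wd_mul f g w (df w) (dg w)
  have hCP : (fun w => conj (f w * g w)) = fun w => conj (f w) * conj (g w) :=
    funext fun w => map_mul (starRingEnd ℂ) _ _
  have e1 : wdb (wd (fun w => f w * g w)) z
      = (wdb (wd f) z * g z + wd f z * wdb g z) + (wdb f z * wd g z + f z * wdb (wd g) z) := by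
    rw [hwdP, wdb_add (fun w => wd f w * g w) (fun w => f w * wd g w) z ((dwf z).mul (dg z)) ((df z).mul (dwg z)),
      wdb_mul _ _ z (dwf z) (dg z), wdb_mul _ _ z (df z) (dwg z)]
  have e2 : wdb (fun w => conj (f w * g w)) z
      = wdb (fun w => conj (f w)) z * conj (g z) + conj (f z) * wdb (fun w => conj (g w)) z := by
    rw [hCP, wdb_mul _ _ z (dcf z) (dcg z)]
  have e3 : wd (fun w => f w * g w) z = wd f z * g z + f z * wd g z :=
    wd_mul f g z (df z) (dg z)
  rw [e1, e2, e3]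
  linear_combination alg (wdb (wd f) z) (wdb (wd g) z) (wd f z) (wdb f z)
    (wdb (fun w => conj (f w)) z) (wd g z) (wdb g z) (wdb (fun w => conj (g w)) z)
    (f z) (g z) (conj (f z)) (conj (g z)) (c z)
    (hfe z) (hge z) (unitmod_wdb hf hfm z) (unitmod_wdb hg hgm z) (hfm z) (hgm z)

theorem stmt11 (n : ℕ) (ξ : Fin n → ℂ → ℂ) (a : ℂ → ℝ)
    (hξ : ∀ k, ContDiff ℝ (⊤ : ℕ∞) (ξ k)) (hmod : ∀ k z, ξ k z * conj (ξ k z) = 1)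
    (ha : ContDiff ℝ (⊤ : ℕ∞) a) (hapos : ∀ z, 0 < a z)
    (heq : ∀ k z, wdb (wd (ξ k)) z + wd (ξ k) z * wdb (fun w => conj (ξ k w)) z * ξ k z
        + wdb (lnC a) z * wd (ξ k) z = 0) :
    (∀ z, (∏ k, ξ k z) * conj (∏ k, ξ k z) = 1) ∧
    (∀ z, wdb (wd (fun w => ∏ k, ξ k w)) z
        + wd (fun w => ∏ k, ξ k w) z * wdb (fun w => conj (∏ k, ξ k w)) z * (∏ k, ξ k z)
        + wdb (lnC a) z * wd (fun w => ∏ k, ξ k w) z = 0) := by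
  set c : ℂ → ℂ := wdb (lnC a) with hc
  suffices h : ∀ (m : ℕ) (ξ : Fin m → ℂ → ℂ), (∀ k, ContDiff ℝ (⊤ : ℕ∞) (ξ k)) →
      (∀ k z, ξ k z * conj (ξ k z) = 1) →
      (∀ k z, wdb (wd (ξ k)) z + wd (ξ k) z * wdb (fun w => conj (ξ k w)) z * ξ k z
        + c z * wd (ξ k) z = 0) →
      ContDiff ℝ (⊤ : ℕ∞) (fun w => ∏ k, ξ k w) ∧
      (∀ z, (∏ k, ξ k z) * conj (∏ k, ξ k z) = 1) ∧
      (∀ z, wdb (wd (fun w => ∏ k, ξ k w)) z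
        + wd (fun w => ∏ k, ξ k w) z * wdb (fun w => conj (∏ k, ξ k w)) z * (∏ k, ξ k z)
        + c z * wd (fun w => ∏ k, ξ k w) z = 0) by
    obtain ⟨_, h2, h3⟩ := h n ξ hξ hmod heq
    exact ⟨h2, h3⟩
  intro m
  induction m with
  | zero =>
    intro ξ _ _ _
    simp only [Finset.univ_eq_empty, Finset.prod_empty, map_one]
    have hw : wd (fun _ : ℂ => (1:ℂ)) = fun _ => 0 := funext fun z => wd_const 1 z
    refine ⟨contDiff_const, fun z => by simp, fun z => ?_⟩
    rw [hw, wdb_const]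
    simp
  | succ m ih =>
    intro ξ hs hm he
    obtain ⟨ih1, ih2, ih3⟩ := ih (fun k => ξ k.succ) (fun k => hs k.succ)
      (fun k => hm k.succ) (fun k => he k.succ)
    have hk := key c (ξ 0) (fun w => ∏ k : Fin m, ξ k.succ w) (hs 0) ih1
      (hm 0) ih2 (he 0) ih3
    obtain ⟨k1, k2, k3⟩ := hk
    simp only [Fin.prod_univ_succ]
    exact ⟨k1, fun z => k2 z, fun z => k3 z⟩
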